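/- arXiv:1810.02538 — 3 statements merged into one kernel-verified Lean document; each statement's English description precedes it below -/
import Mathlib

section
/- Let μ be a compactly supported probability measure on ℝ whose Stieltjes transform satisfies G_μ(r(μ)) = ∞ (where the value at the right edge r(μ) is defined as the monotone limit). Then the R-transform R_μ(z) = K_μ(z) − 1/z converges to r(μ) as z → ∞. -/
open MeasureTheory Filter Topology

noncomputable def rEdge (μ : Measure ℝ) : ℝ := sInf {r : ℝ | μ (Set.Ioi r) = 0}

def suppBdd (μ : Measure ℝ) : Prop := ∃ R : ℝ, μ {y : ℝ | R < |y|} = 0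

noncomputable def stG (μ : Measure ℝ) (l : ℝ) : ℝ := ∫ y, (l - y)⁻¹ ∂μ

/-!
Since μ lives on `(-∞, r(μ)]`, `G_μ` is finite and antitone on `(r(μ), ∞)`. So `G_μ (K z) = z`
can only be large when `K z` is close to `r(μ)`: as `z → ∞`, `K z → r(μ)` while `1 / z → 0`.
-/

section Edge

variable {μ : Measure ℝ}

lemma measure_Ioi_eq_zero_of_rEdge_lt (hcs : suppBdd μ) {t : ℝ} (ht : rEdge μ < t) :
    μ (Set.Ioi t) = 0 := by
  obtain ⟨R, hR⟩ := hcs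
  have hne : {s : ℝ | μ (Set.Ioi s) = 0}.Nonempty :=
    ⟨|R|, measure_mono_null (fun y (hy : |R| < y) => (le_abs_self R).trans_lt
      (hy.trans_le (le_abs_self y))) hR⟩
  obtain ⟨s, hs, hst⟩ := exists_lt_of_csInf_lt hne ht
  exact measure_mono_null (Set.Ioi_subset_Ioi hst.le) hs

lemma measure_Ioi_rEdge (hcs : suppBdd μ) : μ (Set.Ioi (rEdge μ)) = 0 := by
  have hcover : Set.Ioi (rEdge μ) ⊆ ⋃ n : ℕ, Set.Ioi (rEdge μ + 1 / (n + 1)) := by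
    intro y (hy : rEdge μ < y)
    obtain ⟨n, hn⟩ := exists_nat_one_div_lt (sub_pos.mpr hy)
    exact Set.mem_iUnion.mpr ⟨n, show _ < y by linarith⟩
  refine measure_mono_null hcover (measure_iUnion_null fun n => ?_)
  exact measure_Ioi_eq_zero_of_rEdge_lt hcs (lt_add_of_pos_right _ Nat.one_div_pos_of_nat)

lemma ae_le_rEdge (hcs : suppBdd μ) : ∀ᵐ y ∂μ, y ≤ rEdge μ := by
  rw [ae_iff]
  simp only [not_le]
  exact measure_Ioi_rEdge hcs

end Edge

section Stieltjes

variable {μ : Measure ℝ} {r : ℝ}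

lemma integrable_inv_sub_of_ae_le [IsFiniteMeasure μ] (hae : ∀ᵐ y ∂μ, y ≤ r) {l : ℝ}
    (hl : r < l) : Integrable (fun y => (l - y)⁻¹) μ := by
  refine (integrable_const (l - r)⁻¹).mono'
    (measurable_const.sub measurable_id).inv.aestronglyMeasurable ?_
  filter_upwards [hae] with y hy
  rw [Real.norm_eq_abs, abs_of_pos (inv_pos.mpr (by linarith))]
  exact inv_anti₀ (by linarith) (by linarith)

lemma antitoneOn_stG [IsFiniteMeasure μ] (hae : ∀ᵐ y ∂μ, y ≤ r) :
    AntitoneOn (stG μ) (Set.Ioi r) := by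
  intro a (ha : r < a) b (hb : r < b) hab
  refine integral_mono_ae (integrable_inv_sub_of_ae_le hae hb)
    (integrable_inv_sub_of_ae_le hae ha) ?_
  filter_upwards [hae] with y hy
  exact inv_anti₀ (by linarith) (by linarith)

end Stieltjes

lemma tendsto_nhds_of_antitoneOn_comp_eq {f K : ℝ → ℝ} {r : ℝ}
    (hf : AntitoneOn f (Set.Ioi r)) (hKr : ∀ᶠ z in atTop, r < K z)
    (hfK : ∀ᶠ z in atTop, f (K z) = z) : Tendsto K atTop (𝓝 r) := by
  refine tendsto_order.2 ⟨fun a ha => hKr.mono fun z hz => ha.trans hz, fun b hb => ?_⟩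
  filter_upwards [hKr, hfK, eventually_gt_atTop (f b)] with z hrz hfz hz
  by_contra! hbz
  have := hf hb hrz hbz
  linarith

theorem stmt3_general (μ : Measure ℝ) [IsProbabilityMeasure μ] (hcs : suppBdd μ)
    (K : ℝ → ℝ)
    (hK : ∀ z : ℝ, 0 < z → rEdge μ < K z ∧ stG μ (K z) = z) :
    Tendsto (fun z : ℝ => K z - 1 / z) atTop (𝓝 (rEdge μ)) := by
  have hK' : ∀ᶠ z in atTop, rEdge μ < K z ∧ stG μ (K z) = z :=
    (eventually_gt_atTop 0).mono hK
  have hKlim : Tendsto K atTop (𝓝 (rEdge μ)) :=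
    tendsto_nhds_of_antitoneOn_comp_eq (antitoneOn_stG (ae_le_rEdge hcs))
      (hK'.mono fun _ h => h.1) (hK'.mono fun _ h => h.2)
  simpa only [one_div, sub_zero] using hKlim.sub tendsto_inv_atTop_zero

/-- If G_μ(r(μ)) = ∞ (monotone limit, i.e. the edge integral diverges), then the
    R-transform R_μ(z) = K_μ(z) − 1/z tends to r(μ) as z → ∞. -/
theorem stmt3 (μ : Measure ℝ) [IsProbabilityMeasure μ] (hcs : suppBdd μ)
    (hdiv : ∫⁻ y, ENNReal.ofReal ((rEdge μ - y)⁻¹) ∂μ = ⊤)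
    (K : ℝ → ℝ)
    (hK : ∀ z : ℝ, 0 < z → rEdge μ < K z ∧ stG μ (K z) = z) :
    Tendsto (fun z : ℝ => K z - 1 / z) atTop (𝓝 (rEdge μ)) :=
  stmt3_general μ hcs K hK
end

section
/- Let μ be a compactly supported probability measure on ℝ. Then the R-transform R_μ is strictly increasing on (0, G_μ(r(μ))) unless μ is a point mass, in which case R_μ is constant. -/
open MeasureTheory Filter Topology

/-! For `z₁ < z₂` put `b = K z₁` and `a = K z₂`. The resolvent identity gives
`z₂ - z₁ = G a - G b = (b - a) ∫ (a - y)⁻¹ (b - y)⁻¹ dμ`, and Chebyshev's integral inequality for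
the two increasing functions `y ↦ (a - y)⁻¹`, `y ↦ (b - y)⁻¹` bounds that integral strictly from
below by `G a * G b = z₁ z₂`, unless `μ` is a point mass. Hence `b - a < 1 / z₁ - 1 / z₂`.
For `μ = δ_c` one has `G l = (l - c)⁻¹`, so `K z = c + 1 / z`. -/

lemma StrictMonoOn.sub_mul_sub_pos {α R : Type*} [LinearOrder α] [Ring R] [LinearOrder R]
    [IsStrictOrderedRing R] {s : Set α} {f g : α → R} (hf : StrictMonoOn f s)
    (hg : StrictMonoOn g s) {x y : α} (hx : x ∈ s) (hy : y ∈ s) (hxy : x ≠ y) :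
    0 < (f x - f y) * (g x - g y) := by
  rcases hxy.lt_or_gt with h | h
  · exact mul_pos_of_neg_of_neg (sub_neg.2 (hf hx hy h)) (sub_neg.2 (hg hx hy h))
  · exact mul_pos (sub_pos.2 (hf hy hx h)) (sub_pos.2 (hg hy hx h))

lemma eq_dirac_of_ae_eq {α : Type*} [MeasurableSpace α] {μ : Measure α} [IsProbabilityMeasure μ]
    {x : α} (h : ∀ᵐ y ∂μ, y = x) : μ = Measure.dirac x := by
  simpa using (ProbabilityTheory.hasLaw_dirac_of_ae_eq (X := id) h).map_eq

section Chebyshev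

variable {α : Type*} [MeasurableSpace α] {μ : Measure α} {f g : α → ℝ}

lemma integrable_sub_mul_sub [IsFiniteMeasure μ] (hf : Integrable f μ) (hg : Integrable g μ)
    (hfg : Integrable (fun y => f y * g y) μ) (x : α) :
    Integrable (fun y => (f x - f y) * (g x - g y)) μ := by
  have he : (fun y => (f x - f y) * (g x - g y))
      = fun y => f x * g x - f x * g y - g x * f y + f y * g y := by ext y; ring
  rw [he]
  exact (((integrable_const _).sub (hg.const_mul _)).sub (hf.const_mul _)).add hfg

lemma integral_sub_mul_sub [IsProbabilityMeasure μ] (hf : Integrable f μ) (hg : Integrable g μ)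
    (hfg : Integrable (fun y => f y * g y) μ) (x : α) :
    ∫ y, (f x - f y) * (g x - g y) ∂μ
      = f x * g x - f x * ∫ y, g y ∂μ - g x * ∫ y, f y ∂μ + ∫ y, f y * g y ∂μ := by
  have he : (fun y => (f x - f y) * (g x - g y))
      = fun y => f x * g x - f x * g y - g x * f y + f y * g y := by ext y; ring
  rw [he, integral_add _ hfg, integral_sub _ (hf.const_mul _),
    integral_sub (integrable_const _) (hg.const_mul _), integral_const, integral_const_mul,
    integral_const_mul]
  · simp only [probReal_univ, smul_eq_mul, one_mul]
  · exact (integrable_const _).sub (hg.const_mul _)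
  · exact ((integrable_const _).sub (hg.const_mul _)).sub (hf.const_mul _)

lemma integrable_integral_sub_mul_sub [IsProbabilityMeasure μ] (hf : Integrable f μ) (hg : Integrable g μ)
    (hfg : Integrable (fun y => f y * g y) μ) :
    Integrable (fun x => ∫ y, (f x - f y) * (g x - g y) ∂μ) μ := by
  simp_rw [integral_sub_mul_sub hf hg hfg]
  exact ((hfg.sub (hf.mul_const _)).sub (hg.mul_const _)).add (integrable_const _)

lemma integral_integral_sub_mul_sub [IsProbabilityMeasure μ] (hf : Integrable f μ) (hg : Integrable g μ)
    (hfg : Integrable (fun y => f y * g y) μ) :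
    ∫ x, ∫ y, (f x - f y) * (g x - g y) ∂μ ∂μ
      = 2 * (∫ y, f y * g y ∂μ - (∫ y, f y ∂μ) * ∫ y, g y ∂μ) := by
  simp_rw [integral_sub_mul_sub hf hg hfg]
  rw [integral_add _ (integrable_const _), integral_sub _ (hg.mul_const _),
    integral_sub hfg (hf.mul_const _), integral_const, integral_mul_const, integral_mul_const]
  · simp only [probReal_univ, smul_eq_mul, one_mul]
    ring
  · exact hfg.sub (hf.mul_const _)
  · exact (hfg.sub (hf.mul_const _)).sub (hg.mul_const _)

theorem integral_mul_integral_lt_integral_mul [IsProbabilityMeasure μ] {s : Set α} (hs : ∀ᵐ x ∂μ, x ∈ s)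
    (hf : Integrable f μ) (hg : Integrable g μ) (hfg : Integrable (fun y => f y * g y) μ)
    (hpos : ∀ x ∈ s, ∀ y ∈ s, x ≠ y → 0 < (f x - f y) * (g x - g y))
    (hμ : ¬ ∃ c, μ = Measure.dirac c) :
    (∫ y, f y ∂μ) * (∫ y, g y ∂μ) < ∫ y, f y * g y ∂μ := by
  have hnonneg : ∀ x ∈ s, 0 ≤ᵐ[μ] fun y => (f x - f y) * (g x - g y) := fun x hx => by
    filter_upwards [hs] with y hy
    rcases eq_or_ne x y with rfl | hxy
    · simp
    · exact (hpos x hx y hy hxy).le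
  have hφ : 0 ≤ᵐ[μ] fun x => ∫ y, (f x - f y) * (g x - g y) ∂μ := by
    filter_upwards [hs] with x hx using integral_nonneg_of_ae (hnonneg x hx)
  by_contra! hle
  have hφ0 : (fun x => ∫ y, (f x - f y) * (g x - g y) ∂μ) =ᵐ[μ] 0 := by
    refine (integral_eq_zero_iff_of_nonneg_ae hφ (integrable_integral_sub_mul_sub hf hg hfg)).1 ?_
    refine le_antisymm ?_ (integral_nonneg_of_ae hφ)
    rw [integral_integral_sub_mul_sub hf hg hfg]
    linarith
  obtain ⟨x, hx, hφx⟩ := (hs.and hφ0).exists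
  have hx0 : (fun y => (f x - f y) * (g x - g y)) =ᵐ[μ] 0 :=
    (integral_eq_zero_iff_of_nonneg_ae (hnonneg x hx) (integrable_sub_mul_sub hf hg hfg x)).1 hφx
  refine hμ ⟨x, eq_dirac_of_ae_eq ?_⟩
  filter_upwards [hs, hx0] with y hy hy0
  by_contra hyx
  exact (hpos x hx y hy (Ne.symm hyx)).ne' hy0

end Chebyshev

lemma exists_lt_ae_le_of_rEdge_lt {μ : Measure ℝ} (hcs : suppBdd μ) {a : ℝ}
    (ha : rEdge μ < a) : ∃ r < a, ∀ᵐ y ∂μ, y ≤ r := by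
  obtain ⟨R, hR⟩ := hcs
  have hR_mem : R ∈ {r : ℝ | μ (Set.Ioi r) = 0} :=
    measure_mono_null (fun y (hy : R < y) => hy.trans_le (le_abs_self y)) hR
  obtain ⟨r, hr, hra⟩ := exists_lt_of_csInf_lt ⟨R, hR_mem⟩ ha
  exact ⟨r, hra, ae_iff.2 (by simp only [not_le]; exact hr)⟩

lemma strictMonoOn_inv_sub (a : ℝ) : StrictMonoOn (fun y => (a - y)⁻¹) (Set.Iio a) :=
  fun x hx y hy hxy => (inv_lt_inv₀ (sub_pos.2 hx) (sub_pos.2 hy)).2 (by linarith)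

section Resolvent

variable {μ : Measure ℝ} {r a b : ℝ}

lemma ae_norm_inv_sub_le (hr : ∀ᵐ y ∂μ, y ≤ r) (ha : r < a) :
    ∀ᵐ y ∂μ, ‖(a - y)⁻¹‖ ≤ (a - r)⁻¹ := by
  filter_upwards [hr] with y hy
  rw [Real.norm_eq_abs, abs_of_pos (inv_pos.2 (by linarith))]
  gcongr

lemma integrable_inv_sub [IsFiniteMeasure μ] (hr : ∀ᵐ y ∂μ, y ≤ r) (ha : r < a) :
    Integrable (fun y => (a - y)⁻¹) μ :=
  .of_bound (by fun_prop) _ (ae_norm_inv_sub_le hr ha)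

lemma integrable_inv_sub_mul_inv_sub [IsFiniteMeasure μ] (hr : ∀ᵐ y ∂μ, y ≤ r) (ha : r < a)
    (hb : r < b) : Integrable (fun y => (a - y)⁻¹ * (b - y)⁻¹) μ :=
  (integrable_inv_sub hr hb).bdd_mul (by fun_prop) (ae_norm_inv_sub_le hr ha)

lemma stG_sub_stG [IsFiniteMeasure μ] (hr : ∀ᵐ y ∂μ, y ≤ r) (ha : r < a) (hb : r < b) :
    stG μ a - stG μ b = (b - a) * ∫ y, (a - y)⁻¹ * (b - y)⁻¹ ∂μ := by
  rw [stG, stG, ← integral_sub (integrable_inv_sub hr ha) (integrable_inv_sub hr hb),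
    ← integral_const_mul]
  refine integral_congr_ae ?_
  filter_upwards [hr] with y hy
  have hay : a - y ≠ 0 := by linarith
  have hby : b - y ≠ 0 := by linarith
  field_simp
  ring

lemma stG_mul_stG_lt [IsProbabilityMeasure μ] (hμ : ¬ ∃ c, μ = Measure.dirac c)
    (hr : ∀ᵐ y ∂μ, y ≤ r) (ha : r < a) (hb : r < b) :
    stG μ a * stG μ b < ∫ y, (a - y)⁻¹ * (b - y)⁻¹ ∂μ :=
  integral_mul_integral_lt_integral_mul (s := Set.Iic r) hr (integrable_inv_sub hr ha)
    (integrable_inv_sub hr hb) (integrable_inv_sub_mul_inv_sub hr ha hb)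
    (fun _ hx _ hy hxy => ((strictMonoOn_inv_sub a).mono (Set.Iic_subset_Iio.2 ha)).sub_mul_sub_pos
      ((strictMonoOn_inv_sub b).mono (Set.Iic_subset_Iio.2 hb)) hx hy hxy) hμ

lemma sub_lt_one_div_stG_sub_one_div_stG [IsProbabilityMeasure μ]
    (hμ : ¬ ∃ c, μ = Measure.dirac c) (hr : ∀ᵐ y ∂μ, y ≤ r) (ha : r < a) (hb : r < b)
    (hb₀ : 0 < stG μ b) (hba : stG μ b < stG μ a) :
    b - a < 1 / stG μ b - 1 / stG μ a := by
  have hdiff := stG_sub_stG hr ha hb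
  have hlt := stG_mul_stG_lt hμ hr ha hb
  set P := ∫ y, (a - y)⁻¹ * (b - y)⁻¹ ∂μ
  have ha₀ : 0 < stG μ a := hb₀.trans hba
  have hP : 0 < P := (mul_pos ha₀ hb₀).trans hlt
  calc b - a = (stG μ a - stG μ b) / P := by rw [hdiff]; field_simp
    _ < (stG μ a - stG μ b) / (stG μ a * stG μ b) :=
      div_lt_div_of_pos_left (sub_pos.2 hba) (by positivity) hlt
    _ = 1 / stG μ b - 1 / stG μ a := by field_simp

end Resolvent

/-- The R-transform R_μ = K_μ − 1/· is strictly increasing on its domain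
    (0, G_μ(r(μ))) unless μ is a point mass, in which case it is constant
    (equal to the location of the atom). -/
theorem stmt5 (μ : Measure ℝ) [IsProbabilityMeasure μ] (hcs : suppBdd μ)
    (K : ℝ → ℝ) (S : Set ℝ) (hS : S ⊆ Set.Ioi (0 : ℝ))
    (hK : ∀ z ∈ S, rEdge μ < K z ∧ stG μ (K z) = z) :
    ((¬ ∃ c : ℝ, μ = Measure.dirac c) →
        StrictMonoOn (fun z : ℝ => K z - 1 / z) S) ∧
      (∀ c : ℝ, μ = Measure.dirac c → ∀ z ∈ S, K z - 1 / z = c) := by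
  refine ⟨fun hμ z₁ hz₁ z₂ hz₂ hz => ?_, fun c hμ z hz => ?_⟩
  · obtain ⟨hb, hGb⟩ := hK z₁ hz₁
    obtain ⟨ha, hGa⟩ := hK z₂ hz₂
    obtain ⟨r, hr, hae⟩ := exists_lt_ae_le_of_rEdge_lt hcs (lt_min ha hb)
    have key := sub_lt_one_div_stG_sub_one_div_stG hμ hae (hr.trans_le (min_le_left _ _))
      (hr.trans_le (min_le_right _ _)) (by rw [hGb]; exact hS hz₁) (by rwa [hGa, hGb])
    rw [hGa, hGb] at key
    show K z₁ - 1 / z₁ < K z₂ - 1 / z₂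
    linarith
  · have hG := (hK z hz).2
    rw [hμ, stG, integral_dirac, inv_eq_iff_eq_inv] at hG
    rw [one_div, ← hG]
    ring
end

section
/- Let μ be a compactly supported probability measure on ℝ with right edge ρ = r(μ), μ ≠ δ_ρ, and suppose there are α ∈ (0,1] and M < ∞ with G_μ(x) ≤ (1−α)/(x−ρ) + M for all x > ρ. Then for every u > max(G_μ(r(μ)+1), 2M/α) in the domain of the R-transform, R_μ(u) ≤ ρ − α/(2u). -/
open MeasureTheory Filter Topology

/-!
All mass of μ lies at or below ρ = r(μ), so G_μ ≥ 0 to the right of ρ and hence u > 0.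
At x = K_μ(u) > ρ the tail bound reads u ≤ (1 − α)/(x − ρ) + M; since 2M < αu ≤ u this gives
x − ρ ≤ (1 − α)/(u − M) ≤ (2 − α)/(2u) = 1/u − α/(2u).
-/

open Set

section RightEdge

variable {μ : Measure ℝ}

theorem bddBelow_setOf_measure_Ioi_eq_zero [NeZero μ] : BddBelow {r : ℝ | μ (Ioi r) = 0} := by
  by_contra h
  have hnull (n : ℕ) : μ (Ioi (-n : ℝ)) = 0 := by
    obtain ⟨s, hs, hsn⟩ := not_bddBelow_iff.mp h (-n)
    exact measure_mono_null (Ioi_subset_Ioi hsn.le) hs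
  have hcover : (univ : Set ℝ) ⊆ ⋃ n : ℕ, Ioi (-n : ℝ) := fun y _ ↦
    let ⟨n, hn⟩ := exists_nat_gt (-y)
    mem_iUnion.mpr ⟨n, neg_lt.mp hn⟩
  exact NeZero.ne μ (Measure.measure_univ_eq_zero.mp
    (measure_mono_null hcover (measure_iUnion_null hnull)))

theorem measure_Ioi_rEdge_eq_zero [NeZero μ] (h : ∃ R, μ (Ioi R) = 0) :
    μ (Ioi (rEdge μ)) = 0 := by
  obtain ⟨r, -, hr_lim, hr_mem⟩ := exists_seq_tendsto_sInf h bddBelow_setOf_measure_Ioi_eq_zero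
  have hcover : Ioi (rEdge μ) ⊆ ⋃ n, Ioi (r n) := fun y hy ↦
    let ⟨n, hn⟩ := (hr_lim.eventually (gt_mem_nhds hy)).exists
    mem_iUnion.mpr ⟨n, hn⟩
  exact measure_mono_null hcover (measure_iUnion_null hr_mem)

theorem ae_le_rEdge_s7 [NeZero μ] (h : ∃ R, μ (Ioi R) = 0) : ∀ᵐ y ∂μ, y ≤ rEdge μ := by
  simp only [ae_iff, not_le]
  exact measure_Ioi_rEdge_eq_zero h

end RightEdge

theorem suppBdd.exists_measure_Ioi_eq_zero {μ : Measure ℝ} (h : suppBdd μ) :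
    ∃ R, μ (Ioi R) = 0 :=
  let ⟨R, hR⟩ := h
  ⟨R, measure_mono_null (fun y hy ↦ lt_of_lt_of_le hy (le_abs_self y)) hR⟩

theorem stG_nonneg {μ : Measure ℝ} {x : ℝ} (h : ∀ᵐ y ∂μ, y ≤ x) : 0 ≤ stG μ x :=
  integral_nonneg_of_ae (h.mono fun _ hy ↦ inv_nonneg.mpr (sub_nonneg.mpr hy))

theorem sub_le_sub_div_of_le_div_add {α M u ρ k : ℝ} (hα1 : α ≤ 1) (hu : 0 < u)
    (hM : 2 * M < α * u) (hk : ρ < k) (h : u ≤ (1 - α) / (k - ρ) + M) :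
    k - 1 / u ≤ ρ - α / (2 * u) := by
  have huM : 0 < u - M := by nlinarith
  have hkρ : k - ρ ≤ (1 - α) / (u - M) := by
    rw [le_div_iff₀ huM, mul_comm, ← le_div_iff₀ (sub_pos.mpr hk)]
    linarith
  have hbound : (1 - α) / (u - M) ≤ 1 / u - α / (2 * u) := by
    rw [div_sub_div _ _ hu.ne' (by positivity), div_le_div_iff₀ huM (by positivity)]
    have hM' : (2 - α) * M ≤ α * u := by
      rcases le_total 0 α with hα0 | hα0 <;> rcases le_total 0 M with hM0 | hM0 <;> nlinarith
    nlinarith [mul_le_mul_of_nonneg_left hM' hu.le]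
  linarith

theorem stmt7_general (μ : Measure ℝ) [IsProbabilityMeasure μ] (hcs : suppBdd μ)
    (α M : ℝ) (hα : 0 < α) (hα1 : α ≤ 1)
    (htail : ∀ x : ℝ, rEdge μ < x → stG μ x ≤ (1 - α) / (x - rEdge μ) + M)
    (K : ℝ → ℝ) (u : ℝ)
    (hu : max (stG μ (rEdge μ + 1)) (2 * M / α) < u)
    (hK : rEdge μ < K u ∧ stG μ (K u) = u) :
    K u - 1 / u ≤ rEdge μ - α / (2 * u) := by
  obtain ⟨hKρ, hGK⟩ := hK
  have hae := ae_le_rEdge_s7 hcs.exists_measure_Ioi_eq_zero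
  have hu0 : 0 < u :=
    (stG_nonneg (hae.mono fun _ hy ↦ by linarith)).trans_lt ((le_max_left _ _).trans_lt hu)
  have hM : 2 * M < α * u := by
    have := (div_lt_iff₀ hα).mp ((le_max_right _ _).trans_lt hu)
    linarith
  exact sub_le_sub_div_of_le_div_add hα1 hu0 hM hKρ (hGK.symm.trans_le (htail _ hKρ))

/-- If μ ≠ δ_ρ (ρ = r(μ)) satisfies the tail bound G_μ(x) ≤ (1−α)/(x−ρ) + M for
    x > ρ, then for every u > max(G_μ(r(μ)+1), 2M/α) in the domain of the
    R-transform, R_μ(u) = K_μ(u) − 1/u ≤ ρ − α/(2u). -/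
theorem stmt7 (μ : Measure ℝ) [IsProbabilityMeasure μ] (hcs : suppBdd μ)
    (hnd : μ ≠ Measure.dirac (rEdge μ))
    (α M : ℝ) (hα : 0 < α) (hα1 : α ≤ 1)
    (htail : ∀ x : ℝ, rEdge μ < x → stG μ x ≤ (1 - α) / (x - rEdge μ) + M)
    (K : ℝ → ℝ) (u : ℝ)
    (hu : max (stG μ (rEdge μ + 1)) (2 * M / α) < u)
    (hK : rEdge μ < K u ∧ stG μ (K u) = u) :
    K u - 1 / u ≤ rEdge μ - α / (2 * u) :=
  stmt7_general μ hcs α M hα hα1 htail K u hu hK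
end
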